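/- Consider the fully discrete scheme with σ = 1: M-periodic sequences m^n, m^*, u^n, u^*, ρ^n, ρ^* satisfy (m_i^* - m_i^n)/(τ/2) + [(m_{i+1}^* u_{i+1}^* - m_{i-1}^* u_{i-1}^*) + m_i^*(u_{i+1}^* - u_{i-1}^*)]/(2h) = A(u_{i+1}^* - u_{i-1}^*)/(2h) - μ(u_{i+2}^* - 2u_{i+1}^* + 2u_{i-1}^* - u_{i-2}^*)/(2h³) - (1-2ΩA)[(ρ_{i+1}^*)² - (ρ_{i-1}^*)²]/(4h) + (Ω/(2h)) ρ_i^*[(u_{i+1}^*+u_i^*)(ρ_{i+1}^*+ρ_i^*) - (u_{i-1}^*+u_i^*)(ρ_{i-1}^*+ρ_i^*)], together with the continuity equation (ρ_i^* - ρ_i^n)/(τ/2) + [(u_{i+1}^*+u_i^*)(ρ_{i+1}^*+ρ_i^*) - (u_{i-1}^*+u_i^*)(ρ_{i-1}^*+ρ_i^*)]/(4h) = 0, the relation m_i^n = u_i^n - (v_{i+1}^n - v_{i-1}^n)/(2h) with v_i^n = (u_{i+1}^n - u_{i-1}^n)/(2h) at both levels n and n+1 (and level *), and updates u_i^{n+1}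 = 2u_i^* - u_i^n, m_i^{n+1} = 2m_i^* - m_i^n, ρ_i^{n+1} = 2ρ_i^* - ρ_i^n. Then the discrete momentum I₂^n = ∑_{i=1}^{M} [u_i^n + Ω(ρ_i^n)²] satisfies I₂^{n+1} = I₂^n. -/

import Mathlib

/-!
Over a period, every centered difference `f (i + 1) - f (i - 1)` of a periodic sequence sums to
zero, and so does `f i * (f (i + 1) - f (i - 1))`. Multiplying the momentum equation by `τ / 2`
and eliminating its `Ω`-term with the continuity equation expresses
`m*ᵢ - mⁿᵢ + 2Ω ρ*ᵢ (ρ*ᵢ - ρⁿᵢ)` as `τ / 2` times a centered difference of a flux, minus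
`τ / (4h) · m*ᵢ (u*ᵢ₊₁ - u*ᵢ₋₁)`; the last term sums to zero since `m = u - D v`, `v = D u`
turns it into `∑ u D u - ∑ v D v`. Finally `uⁿ⁺¹ - uⁿ = 2 (u* - uⁿ)` differs from
`2 (m* - mⁿ)` by centered differences of `v`, and `(ρⁿ⁺¹)² - (ρⁿ)² = 4 ρ* (ρ* - ρⁿ)`.
-/

open Finset Function

section PeriodicSums

variable {R : Type*} [AddCommGroup R] {f : ℤ → R} {M : ℤ}

theorem sum_Icc_comp_add_one_of_periodic (hf : Periodic f M) :
    ∑ i ∈ Icc 1 M, f (i + 1) = ∑ i ∈ Icc 1 M, f i := by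
  rcases lt_or_ge M 0 with hM | hM
  · rw [Icc_eq_empty (by omega), sum_empty, sum_empty]
  have shift : ∑ i ∈ Icc 1 M, f (i + 1) = ∑ i ∈ Icc (1 + 1) (M + 1), f i := by
    rw [← map_add_right_Icc, sum_map]; rfl
  have split_bot : f 1 + ∑ i ∈ Icc (1 + 1) (M + 1), f i = ∑ i ∈ Icc 1 (M + 1), f i := by
    rw [← sum_insert (by simp), insert_Icc_add_one_left_eq_Icc (by omega)]
  have split_top : f (M + 1) + ∑ i ∈ Icc 1 M, f i = ∑ i ∈ Icc 1 (M + 1), f i := by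
    rw [← sum_insert (by simp), insert_Icc_right_eq_Icc_add_one (by omega)]
  have wrap : f (M + 1) = f 1 := by rw [add_comm, hf]
  rw [wrap] at split_top
  rw [shift]
  exact add_left_cancel (split_bot.trans split_top.symm)

theorem sum_Icc_comp_sub_one_of_periodic (hf : Periodic f M) :
    ∑ i ∈ Icc 1 M, f (i - 1) = ∑ i ∈ Icc 1 M, f i := by
  simpa using (sum_Icc_comp_add_one_of_periodic (hf.sub_const 1)).symm

theorem sum_Icc_centered_diff_of_periodic (hf : Periodic f M) :
    ∑ i ∈ Icc 1 M, (f (i + 1) - f (i - 1)) = 0 := by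
  rw [sum_sub_distrib, sum_Icc_comp_add_one_of_periodic hf, sum_Icc_comp_sub_one_of_periodic hf,
    sub_self]

end PeriodicSums

theorem sum_Icc_mul_centered_diff_of_periodic {R : Type*} [CommRing R] {f : ℤ → R} {M : ℤ}
    (hf : Periodic f M) : ∑ i ∈ Icc 1 M, f i * (f (i + 1) - f (i - 1)) = 0 := by
  have hprod : Periodic (fun i => f i * f (i + 1)) M := hf.mul (hf.add_const 1)
  calc ∑ i ∈ Icc 1 M, f i * (f (i + 1) - f (i - 1))
      = ∑ i ∈ Icc 1 M, (f i * f (i + 1) - f (i - 1) * f (i - 1 + 1)) := by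
        refine sum_congr rfl fun i _ => ?_
        rw [sub_add_cancel]; ring
    _ = 0 := by
        rw [sum_sub_distrib, sum_Icc_comp_sub_one_of_periodic hprod, sub_self]

section Helmholtz

variable {R : Type*} [Field R] {M : ℤ} {c : R}

theorem periodic_of_eq_centered_diff_div {f v : ℤ → R} (hf : Periodic f M)
    (hv : ∀ i, v i = (f (i + 1) - f (i - 1)) / c) : Periodic v M := by
  intro i
  simp only [hv, hf.add_const 1 i, hf.sub_const 1 i]

theorem sum_Icc_helmholtz_mul_centered_diff_of_periodic {u v m : ℤ → R} (hu : Periodic u M)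
    (hv : ∀ i, v i = (u (i + 1) - u (i - 1)) / c)
    (hm : ∀ i, m i = u i - (v (i + 1) - v (i - 1)) / c) :
    ∑ i ∈ Icc 1 M, m i * (u (i + 1) - u (i - 1)) = 0 := by
  calc ∑ i ∈ Icc 1 M, m i * (u (i + 1) - u (i - 1))
      = ∑ i ∈ Icc 1 M, (u i * (u (i + 1) - u (i - 1)) - v i * (v (i + 1) - v (i - 1))) := by
        refine sum_congr rfl fun i _ => ?_
        rw [hm, hv i]; ring
    _ = 0 := by
        rw [sum_sub_distrib, sum_Icc_mul_centered_diff_of_periodic hu,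
          sum_Icc_mul_centered_diff_of_periodic (periodic_of_eq_centered_diff_div hu hv), sub_self]

end Helmholtz

-- The dispersive term `uᵢ₊₂ - 2uᵢ₊₁ + 2uᵢ₋₁ - uᵢ₋₂` is the centered difference of `uᵢ₊₁ - 2uᵢ + uᵢ₋₁`.
noncomputable def momentumFlux (h A μ Ω : ℝ) (u m ρ : ℤ → ℝ) (i : ℤ) : ℝ :=
  (A - m i) * u i / (2 * h) - μ * (u (i + 1) - 2 * u i + u (i - 1)) / (2 * h ^ 3)
    - (1 - 2 * Ω * A) * ρ i ^ 2 / (4 * h)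

theorem momentumFlux_periodic {h A μ Ω : ℝ} {u m ρ : ℤ → ℝ} {M : ℤ} (hu : Periodic u M)
    (hm : Periodic m M) (hρ : Periodic ρ M) : Periodic (momentumFlux h A μ Ω u m ρ) M := by
  intro i
  simp only [momentumFlux, hu i, hm i, hρ i, hu.add_const 1 i, hu.sub_const 1 i]

theorem fully_discrete_momentum_conservation_general (M : ℤ) (τ h A μ Ω : ℝ)
    (hτ : 0 < τ)
    (un us un1 ρn ρs ρn1 mn ms vn vs : ℤ → ℝ)
    (hper_un : ∀ i, un (i + M) = un i) (hper_us : ∀ i, us (i + M) = us i)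
    (hper_ρs : ∀ i, ρs (i + M) = ρs i)
    (hper_ms : ∀ i, ms (i + M) = ms i)
    (hmomentum : ∀ i, (ms i - mn i) / (τ / 2)
      + ((ms (i + 1) * us (i + 1) - ms (i - 1) * us (i - 1))
          + ms i * (us (i + 1) - us (i - 1))) / (2 * h)
      = A * (us (i + 1) - us (i - 1)) / (2 * h)
        - μ * (us (i + 2) - 2 * us (i + 1) + 2 * us (i - 1) - us (i - 2)) / (2 * h ^ 3)
        - (1 - 2 * Ω * A) * ((ρs (i + 1)) ^ 2 - (ρs (i - 1)) ^ 2) / (4 * h)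
        + (Ω / (2 * h)) * ρs i * ((us (i + 1) + us i) * (ρs (i + 1) + ρs i)
          - (us (i - 1) + us i) * (ρs (i - 1) + ρs i)))
    (hcontinuity : ∀ i, (ρs i - ρn i) / (τ / 2)
      + ((us (i + 1) + us i) * (ρs (i + 1) + ρs i)
        - (us (i - 1) + us i) * (ρs (i - 1) + ρs i)) / (4 * h) = 0)
    (hvn : ∀ i, vn i = (un (i + 1) - un (i - 1)) / (2 * h))
    (hmn : ∀ i, mn i = un i - (vn (i + 1) - vn (i - 1)) / (2 * h))
    (hvs : ∀ i, vs i = (us (i + 1) - us (i - 1)) / (2 * h))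
    (hms : ∀ i, ms i = us i - (vs (i + 1) - vs (i - 1)) / (2 * h))
    (hupd_u : ∀ i, un1 i = 2 * us i - un i)
    (hupd_ρ : ∀ i, ρn1 i = 2 * ρs i - ρn i) :
    ∑ i ∈ Finset.Icc (1 : ℤ) M, (un1 i + Ω * (ρn1 i) ^ 2)
    = ∑ i ∈ Finset.Icc (1 : ℤ) M, (un i + Ω * (ρn i) ^ 2) := by
  have hτ2 : τ / 2 ≠ 0 := by positivity
  set F := momentumFlux h A μ Ω us ms ρs
  have local_balance : ∀ i, ms i - mn i + 2 * Ω * ρs i * (ρs i - ρn i)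
      = τ / 2 * (F (i + 1) - F (i - 1)) - τ / (4 * h) * (ms i * (us (i + 1) - us (i - 1))) :=
    fun i => by
      have hm := mul_div_cancel₀ (ms i - mn i) hτ2
      have hρ := mul_div_cancel₀ (ρs i - ρn i) hτ2
      simp only [F, momentumFlux, add_sub_cancel_right, sub_add_cancel, add_assoc, sub_sub,
        one_add_one_eq_two]
      linear_combination (τ / 2) * hmomentum i - hm + τ * Ω * ρs i * hcontinuity i
        - 2 * Ω * ρs i * hρ
  have local_change : ∀ i, (un1 i + Ω * ρn1 i ^ 2) - (un i + Ω * ρn i ^ 2)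
      = τ * (F (i + 1) - F (i - 1)) - τ / (2 * h) * (ms i * (us (i + 1) - us (i - 1)))
        + (vs (i + 1) - vs (i - 1)) / h - (vn (i + 1) - vn (i - 1)) / h := fun i => by
    linear_combination hupd_u i + Ω * (ρn1 i + 2 * ρs i - ρn i) * hupd_ρ i - 2 * hms i + 2 * hmn i
      + 2 * local_balance i
  rw [← sub_eq_zero, ← sum_sub_distrib, sum_congr rfl fun i _ => local_change i,
    sum_sub_distrib, sum_add_distrib, sum_sub_distrib, ← mul_sum, ← mul_sum, ← sum_div, ← sum_div,
    sum_Icc_centered_diff_of_periodic (momentumFlux_periodic hper_us hper_ms hper_ρs),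
    sum_Icc_helmholtz_mul_centered_diff_of_periodic hper_us hvs hms,
    sum_Icc_centered_diff_of_periodic (periodic_of_eq_centered_diff_div hper_us hvs),
    sum_Icc_centered_diff_of_periodic (periodic_of_eq_centered_diff_div hper_un hvn)]
  simp

theorem fully_discrete_momentum_conservation (M : ℤ) (hM : 1 ≤ M) (τ h A μ Ω : ℝ)
    (hτ : 0 < τ) (hh : 0 < h)
    (un us un1 ρn ρs ρn1 mn ms mn1 vn vs vn1 : ℤ → ℝ)
    (hper_un : ∀ i, un (i + M) = un i) (hper_us : ∀ i, us (i + M) = us i)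
    (hper_ρn : ∀ i, ρn (i + M) = ρn i) (hper_ρs : ∀ i, ρs (i + M) = ρs i)
    (hper_mn : ∀ i, mn (i + M) = mn i) (hper_ms : ∀ i, ms (i + M) = ms i)
    (hmomentum : ∀ i, (ms i - mn i) / (τ / 2)
      + ((ms (i + 1) * us (i + 1) - ms (i - 1) * us (i - 1))
          + ms i * (us (i + 1) - us (i - 1))) / (2 * h)
      = A * (us (i + 1) - us (i - 1)) / (2 * h)
        - μ * (us (i + 2) - 2 * us (i + 1) + 2 * us (i - 1) - us (i - 2)) / (2 * h ^ 3)
        - (1 - 2 * Ω * A) * ((ρs (i + 1)) ^ 2 - (ρs (i - 1)) ^ 2) / (4 * h)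
        + (Ω / (2 * h)) * ρs i * ((us (i + 1) + us i) * (ρs (i + 1) + ρs i)
          - (us (i - 1) + us i) * (ρs (i - 1) + ρs i)))
    (hcontinuity : ∀ i, (ρs i - ρn i) / (τ / 2)
      + ((us (i + 1) + us i) * (ρs (i + 1) + ρs i)
        - (us (i - 1) + us i) * (ρs (i - 1) + ρs i)) / (4 * h) = 0)
    (hvn : ∀ i, vn i = (un (i + 1) - un (i - 1)) / (2 * h))
    (hmn : ∀ i, mn i = un i - (vn (i + 1) - vn (i - 1)) / (2 * h))
    (hvs : ∀ i, vs i = (us (i + 1) - us (i - 1)) / (2 * h))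
    (hms : ∀ i, ms i = us i - (vs (i + 1) - vs (i - 1)) / (2 * h))
    (hvn1 : ∀ i, vn1 i = (un1 (i + 1) - un1 (i - 1)) / (2 * h))
    (hmn1 : ∀ i, mn1 i = un1 i - (vn1 (i + 1) - vn1 (i - 1)) / (2 * h))
    (hupd_u : ∀ i, un1 i = 2 * us i - un i)
    (hupd_m : ∀ i, mn1 i = 2 * ms i - mn i)
    (hupd_ρ : ∀ i, ρn1 i = 2 * ρs i - ρn i) :
    ∑ i ∈ Finset.Icc (1 : ℤ) M, (un1 i + Ω * (ρn1 i) ^ 2)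
    = ∑ i ∈ Finset.Icc (1 : ℤ) M, (un i + Ω * (ρn i) ^ 2) :=
  fully_discrete_momentum_conservation_general M τ h A μ Ω hτ un us un1 ρn ρs ρn1 mn ms vn vs
    hper_un hper_us hper_ρs hper_ms hmomentum hcontinuity hvn hmn hvs hms hupd_u hupd_ρ
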